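/- Let K/F be a Galois extension of number fields, σ ∈ Gal(K/F), δ an F-linear left σ-derivation of K with δ(O_K) ⊆ O_K, 𝔭 a nonzero prime ideal of O_F, and f ∈ O_K[t;σ,δ] monic of degree m. Let Λ = O_K[t;σ,δ]/O_K[t;σ,δ]f and let f̄ ∈ (O_K/𝔭O_K)[t;σ̄,δ̄] be the reduction of f modulo 𝔭O_K. Then the coefficient-wise reduction map Ψ : Λ → S_{f̄} = (O_K/𝔭O_K)[t;σ̄,δ̄]/(O_K/𝔭O_K)[t;σ̄,δ̄]f̄, g ↦ ḡ, is a surjective homomorphism of unital nonassociative rings whose kernel is the two-sided ideal 𝔭Λ = {Σ_{i=0}^{m−1} aᵢtⁱ : aᵢ ∈ 𝔭O_K}, and hence Ψ induces an isomorphism of unital nonassociative rings Λ/𝔭Λ ≅ S_{f̄}. -/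

import Mathlib

/-- A presentation of the skew polynomial ring `S[t;σ,δ]`: a ring `R` together with a
ring homomorphism `C : S →+* R`, a distinguished element `X` (playing the role of `t`)
satisfying the twisted commutation rule `X * C a = C (σ a) * X + C (δ a)`, and such that
every element of `R` is in a unique way a finite sum `∑ C aᵢ * X ^ i`. -/
structure SkewPolyRing (S : Type*) [Ring S] (σ : S →+* S) (δ : S → S)
    (R : Type*) [Ring R] where
  C : S →+* R
  X : R
  X_mul : ∀ a : S, X * C a = C (σ a) * X + C (δ a)
  coeff : R ≃+ (ℕ →₀ S)
  coeff_symm_apply : ∀ p : ℕ →₀ S, coeff.symm p = p.sum fun i a => C a * X ^ i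

namespace SkewPolyRing

variable {S : Type*} [Ring S] {σ : S →+* S} {δ : S → S} {R : Type*} [Ring R]

/-- The degree of a skew polynomial, with `deg 0 = ⊥`. -/
noncomputable def deg (P : SkewPolyRing S σ δ R) (x : R) : WithBot ℕ :=
  (P.coeff x).support.max

/-- The leading coefficient of a skew polynomial. -/
noncomputable def lcoeff (P : SkewPolyRing S σ δ R) (x : R) : S :=
  P.coeff x (WithBot.unbotD 0 (P.deg x))

/-- `f` is monic of degree `m`. -/
def Monic (P : SkewPolyRing S σ δ R) (f : R) (m : ℕ) : Prop :=
  P.deg f = (m : WithBot ℕ) ∧ P.coeff f m = 1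

open Classical in
/-- The remainder of right division by `f`. -/
noncomputable def modr (P : SkewPolyRing S σ δ R) (f g : R) : R :=
  if h : ∃ qr : R × R, g = qr.1 * f + qr.2 ∧ P.deg qr.2 < P.deg f then
    (Classical.choose h).2
  else g

/-- The multiplication `x ∘ y = (x * y) mod_r f` of the Petit algebra `S_f`. -/
noncomputable def pmul (P : SkewPolyRing S σ δ R) (f x y : R) : R :=
  P.modr f (x * y)

/-- The element of `S_f` with coefficient vector `c ∈ S^m`. -/
def ofVec (P : SkewPolyRing S σ δ R) {m : ℕ} (c : Fin m → S) : R :=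
  ∑ i : Fin m, P.C (c i) * P.X ^ (i : ℕ)

end SkewPolyRing

/-- `δ` is a left `σ`-derivation of `S`. -/
def IsLeftSigmaDerivation {S : Type*} [Ring S] (σ : S →+* S) (δ : S → S) : Prop :=
  (∀ a b : S, δ (a + b) = δ a + δ b) ∧ ∀ a b : S, δ (a * b) = σ a * δ b + δ a * b

/-- Coefficient-wise reduction of skew polynomials along a ring homomorphism `π`. -/
noncomputable def SkewPolyRing.red {S T R R' : Type*} [Ring S] [Ring T] [Ring R] [Ring R']
    {σ₁ : S →+* S} {δ₁ : S → S} {σ₂ : T →+* T} {δ₂ : T → T}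
    (P : SkewPolyRing S σ₁ δ₁ R) (Q : SkewPolyRing T σ₂ δ₂ R')
    (π : S →+* T) (x : R) : R' :=
  Q.coeff.symm (Finsupp.mapRange π (map_zero π) (P.coeff x))

open scoped NumberField

set_option synthInstance.maxHeartbeats 800000
set_option maxHeartbeats 1600000

/-!
Since `π ∘ σ = σ̄ ∘ π` and `π ∘ δ = δ̄ ∘ π`, reducing coefficients commutes with left
multiplication by `t`, so it is a ring homomorphism `O_K[t;σ,δ] → (O_K/𝔭O_K)[t;σ̄,δ̄]`. Because
`f` is monic, right division by `f` exists over any ring and has a unique remainder of degree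
`< m`; reducing a division `g = q f + r` gives a division by the monic `f̄`, so reduction commutes
with `mod_r f`. Its kernel on `Λ` is `𝔭Λ`, which is therefore an ideal for the Petit
multiplication.
-/

namespace SkewPolyRing

section Basic

variable {S : Type*} [Ring S] {σ : S →+* S} {δ : S → S} {R : Type*} [Ring R]
  (P : SkewPolyRing S σ δ R)

lemma coeff_symm_single (i : ℕ) (a : S) :
    P.coeff.symm (Finsupp.single i a) = P.C a * P.X ^ i := by
  rw [P.coeff_symm_apply, Finsupp.sum_single_index (by simp)]

lemma coeff_C_mul_X_pow (a : S) (i : ℕ) : P.coeff (P.C a * P.X ^ i) = Finsupp.single i a := by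
  rw [← coeff_symm_single, AddEquiv.apply_symm_apply]

lemma eq_sum_C_mul_X_pow (x : R) : x = (P.coeff x).sum fun i a => P.C a * P.X ^ i := by
  rw [← P.coeff_symm_apply, AddEquiv.symm_apply_apply]

@[elab_as_elim]
lemma induction_on {p : R → Prop} (zero : p 0) (add : ∀ x y, p x → p y → p (x + y))
    (C_mul_X_pow : ∀ (a : S) (i : ℕ), p (P.C a * P.X ^ i)) (x : R) : p x := by
  rw [P.eq_sum_C_mul_X_pow x]
  exact Finset.sum_induction _ p add zero fun i _ => C_mul_X_pow _ _

lemma coeff_C_mul (a : S) (z : R) (j : ℕ) : P.coeff (P.C a * z) j = a * P.coeff z j := by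
  induction z using P.induction_on with
  | zero => simp
  | add x y hx hy => simp only [mul_add, map_add, Finsupp.add_apply, hx, hy]
  | C_mul_X_pow b i =>
      rw [← mul_assoc, ← map_mul, coeff_C_mul_X_pow, coeff_C_mul_X_pow, Finsupp.single_apply,
        Finsupp.single_apply]
      split_ifs <;> simp

lemma coeff_X_mul (z : R) :
    P.coeff (P.X * z) = (P.coeff z).sum fun i a =>
      Finsupp.single (i + 1) (σ a) + Finsupp.single i (δ a) := by
  conv_lhs => rw [P.eq_sum_C_mul_X_pow z]
  rw [Finsupp.mul_sum, map_finsuppSum]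
  refine Finsupp.sum_congr fun i _ => ?_
  rw [← mul_assoc, P.X_mul, add_mul, mul_assoc, ← pow_succ', map_add, coeff_C_mul_X_pow,
    coeff_C_mul_X_pow]

lemma coeff_mul (q z : R) (j : ℕ) :
    P.coeff (q * z) j = ∑ i ∈ (P.coeff q).support, P.coeff q i * P.coeff (P.X ^ i * z) j := by
  conv_lhs => rw [P.eq_sum_C_mul_X_pow q, Finsupp.sum, Finset.sum_mul]
  simp only [map_sum, Finsupp.finsetSum_apply, mul_assoc, coeff_C_mul]

lemma deg_le_natCast_iff {x : R} {d : ℕ} :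
    P.deg x ≤ d ↔ ∀ i, d < i → P.coeff x i = 0 := by
  simp only [deg, Finset.max_le_iff, Finsupp.mem_support_iff, Nat.cast_withBot,
    WithBot.coe_le_coe]
  exact forall_congr' fun i => by rw [← not_imp_not, not_le, not_not]

lemma deg_lt_natCast_iff {x : R} {n : ℕ} :
    P.deg x < n ↔ ∀ i, n ≤ i → P.coeff x i = 0 := by
  simp only [deg, Finset.max, Finset.sup_lt_iff (WithBot.bot_lt_coe n), Finsupp.mem_support_iff,
    Nat.cast_withBot, WithBot.coe_lt_coe]
  exact forall_congr' fun i => by rw [← not_imp_not, not_lt, not_not]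

lemma le_of_mem_support_of_deg_le {z : R} {d i : ℕ} (hz : P.deg z ≤ d)
    (hi : i ∈ (P.coeff z).support) : i ≤ d :=
  WithBot.coe_le_coe.1 ((Finset.le_max hi).trans hz)

lemma exists_deg_lt (x : R) : ∃ n : ℕ, P.deg x < n := by
  rcases h : P.deg x with _ | d
  · exact ⟨0, WithBot.bot_lt_coe 0⟩
  · exact ⟨d + 1, WithBot.coe_lt_coe.2 d.lt_succ_self⟩

lemma deg_sub_lt {x y : R} {n : ℕ} (hx : P.deg x < n) (hy : P.deg y < n) :
    P.deg (x - y) < n := by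
  rw [deg_lt_natCast_iff] at *
  intro i hi
  rw [map_sub, Finsupp.sub_apply, hx i hi, hy i hi, sub_zero]

lemma coeff_X_mul_succ {z : R} {d j : ℕ} (hz : P.deg z ≤ d) (hj : d ≤ j) :
    P.coeff (P.X * z) (j + 1) = σ (P.coeff z j) := by
  rw [coeff_X_mul, Finsupp.sum_apply, Finsupp.sum, Finset.sum_eq_single j]
  · simp
  · intro i hi hij
    have : i ≠ j + 1 := by have := P.le_of_mem_support_of_deg_le hz hi; omega
    simp [hij, this]
  · intro hj
    simp [Finsupp.notMem_support_iff.1 hj]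

lemma deg_X_mul_le {z : R} {d : ℕ} (hz : P.deg z ≤ d) : P.deg (P.X * z) ≤ (d + 1 : ℕ) := by
  refine (P.deg_le_natCast_iff).2 fun i hi => ?_
  obtain ⟨j, rfl⟩ : ∃ j, i = j + 1 := ⟨i - 1, by omega⟩
  rw [P.coeff_X_mul_succ hz (by omega), (P.deg_le_natCast_iff).1 hz j (by omega), map_zero]

end Basic

section Division

variable {S : Type*} [Ring S] {σ : S →+* S} {δ : S → S} {R : Type*} [Ring R]
  {P : SkewPolyRing S σ δ R} {f : R} {m : ℕ}

lemma Monic.deg_X_pow_mul_le (hf : P.Monic f m) (k : ℕ) : P.deg (P.X ^ k * f) ≤ (k + m : ℕ) := by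
  induction k with
  | zero => simpa using hf.1.le
  | succ k ih => simpa [pow_succ', mul_assoc, Nat.succ_add] using P.deg_X_mul_le ih

lemma Monic.coeff_X_pow_mul (hf : P.Monic f m) (k : ℕ) : P.coeff (P.X ^ k * f) (k + m) = 1 := by
  induction k with
  | zero => simpa using hf.2
  | succ k ih =>
    rw [pow_succ', mul_assoc, Nat.succ_add, P.coeff_X_mul_succ (hf.deg_X_pow_mul_le k) le_rfl, ih,
      map_one]

lemma Monic.coeff_mul_add (hf : P.Monic f m) {q : R} {d : ℕ} (hq : P.deg q ≤ d) :
    P.coeff (q * f) (d + m) = P.coeff q d := by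
  rw [coeff_mul, Finset.sum_eq_single d]
  · rw [hf.coeff_X_pow_mul, mul_one]
  · intro i hi hid
    have hid' : i < d := (P.le_of_mem_support_of_deg_le hq hi).lt_of_ne hid
    rw [(P.deg_le_natCast_iff).1 (hf.deg_X_pow_mul_le i) _ (by omega), mul_zero]
  · intro hd
    rw [Finsupp.notMem_support_iff.1 hd, zero_mul]

lemma Monic.eq_zero_of_deg_mul_lt (hf : P.Monic f m) {q : R} (h : P.deg (q * f) < m) : q = 0 := by
  by_contra hq
  obtain ⟨d, hd⟩ : ∃ d : ℕ, P.deg q = d :=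
    Finset.max_of_nonempty (Finsupp.support_nonempty_iff.2 ((AddEquivClass.map_ne_zero_iff).2 hq))
  have hqd : P.coeff q d ≠ 0 := Finsupp.mem_support_iff.1 (Finset.mem_of_max hd)
  rw [← hf.coeff_mul_add hd.le, (P.deg_lt_natCast_iff).1 h _ (Nat.le_add_left m d)] at hqd
  exact hqd rfl

lemma Monic.eq_of_mul_add_eq_mul_add (hf : P.Monic f m) {q₁ q₂ r₁ r₂ : R}
    (h : q₁ * f + r₁ = q₂ * f + r₂) (h₁ : P.deg r₁ < m) (h₂ : P.deg r₂ < m) : r₁ = r₂ := by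
  have hq : (q₁ - q₂) * f = r₂ - r₁ := by
    rw [sub_mul, sub_eq_sub_iff_add_eq_add, h, add_comm]
  have hq0 := hf.eq_zero_of_deg_mul_lt (hq ▸ P.deg_sub_lt h₂ h₁)
  rw [hq0, zero_mul, eq_comm, sub_eq_zero] at hq
  exact hq.symm

lemma Monic.exists_eq_mul_add (hf : P.Monic f m) (g : R) :
    ∃ q r, g = q * f + r ∧ P.deg r < m := by
  obtain ⟨n, hn⟩ := P.exists_deg_lt g
  induction n generalizing g with
  | zero => exact ⟨0, g, by simp, hn.trans_le (by exact_mod_cast Nat.zero_le m)⟩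
  | succ n ih =>
    by_cases hnm : n < m
    · exact ⟨0, g, by simp, hn.trans_le (by exact_mod_cast hnm)⟩
    obtain ⟨k, rfl⟩ : ∃ k, n = k + m := ⟨n - m, by omega⟩
    set a := P.coeff g (k + m)
    have hlt : P.deg (g - P.C a * (P.X ^ k * f)) < (k + m : ℕ) := by
      rw [deg_lt_natCast_iff] at hn ⊢
      intro i hi
      rw [map_sub, Finsupp.sub_apply, coeff_C_mul]
      rcases hi.eq_or_lt with rfl | hi
      · rw [hf.coeff_X_pow_mul, mul_one, sub_self]
      · rw [hn i hi, (P.deg_le_natCast_iff).1 (hf.deg_X_pow_mul_le k) i hi, mul_zero, sub_zero]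
    obtain ⟨q, r, hg, hr⟩ := ih _ hlt
    exact ⟨q + P.C a * P.X ^ k, r, by rw [add_mul, mul_assoc, add_right_comm, ← hg,
      sub_add_cancel], hr⟩

lemma Monic.modr_eq (hf : P.Monic f m) {g q r : R} (hg : g = q * f + r) (hr : P.deg r < m) :
    P.modr f g = r := by
  have hex : ∃ qr : R × R, g = qr.1 * f + qr.2 ∧ P.deg qr.2 < P.deg f := ⟨(q, r), hg, hf.1 ▸ hr⟩
  obtain ⟨hg', hr'⟩ := Classical.choose_spec hex
  rw [modr, dif_pos hex]
  exact hf.eq_of_mul_add_eq_mul_add (hg' ▸ hg) (hf.1 ▸ hr') hr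

lemma Monic.deg_modr_lt (hf : P.Monic f m) (g : R) : P.deg (P.modr f g) < m := by
  obtain ⟨q, r, hg, hr⟩ := hf.exists_eq_mul_add g
  rwa [hf.modr_eq hg hr]

lemma Monic.modr_zero (hf : P.Monic f m) : P.modr f 0 = 0 :=
  hf.modr_eq (q := 0) (by simp) (by simp [deg_lt_natCast_iff])

end Division

section Reduction

variable {S T R R' : Type*} [Ring S] [Ring T] [Ring R] [Ring R']
  {σ₁ : S →+* S} {δ₁ : S → S} {σ₂ : T →+* T} {δ₂ : T → T}
  (P : SkewPolyRing S σ₁ δ₁ R) (Q : SkewPolyRing T σ₂ δ₂ R') (π : S →+* T)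

lemma coeff_red (x : R) (i : ℕ) : Q.coeff (P.red Q π x) i = π (P.coeff x i) := by
  rw [red, AddEquiv.apply_symm_apply, Finsupp.mapRange_apply]

lemma red_add (x y : R) : P.red Q π (x + y) = P.red Q π x + P.red Q π y := by
  rw [red, red, red, ← map_add, map_add, Finsupp.mapRange_add (map_add π)]

lemma red_zero : P.red Q π 0 = 0 := by
  simp [red]

lemma red_C_mul_X_pow (a : S) (i : ℕ) : P.red Q π (P.C a * P.X ^ i) = Q.C (π a) * Q.X ^ i := by
  rw [red, coeff_C_mul_X_pow, Finsupp.mapRange_single, coeff_symm_single]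

lemma red_one : P.red Q π 1 = 1 := by
  simpa using P.red_C_mul_X_pow Q π 1 0

lemma red_C_mul (a : S) (z : R) : P.red Q π (P.C a * z) = Q.C (π a) * P.red Q π z := by
  induction z using P.induction_on with
  | zero => simp [red_zero]
  | add x y hx hy => rw [mul_add, red_add, red_add, mul_add, hx, hy]
  | C_mul_X_pow b i =>
    rw [← mul_assoc, ← map_mul, red_C_mul_X_pow, red_C_mul_X_pow, map_mul, map_mul, mul_assoc]

lemma deg_red_le (x : R) : Q.deg (P.red Q π x) ≤ P.deg x := by
  rw [deg, deg, red, AddEquiv.apply_symm_apply]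
  exact Finset.max_mono Finsupp.support_mapRange

lemma red_eq_zero_iff {x : R} : P.red Q π x = 0 ↔ ∀ i, π (P.coeff x i) = 0 := by
  rw [← map_eq_zero_iff Q.coeff Q.coeff.injective, Finsupp.ext_iff]
  simp only [coeff_red, Finsupp.coe_zero, Pi.zero_apply]

lemma exists_deg_lt_red_eq (hπ : Function.Surjective π) {y : R'} {n : ℕ} (hy : Q.deg y < n) :
    ∃ x, P.deg x < n ∧ P.red Q π x = y := by
  obtain ⟨s, hs0, hs⟩ : ∃ s : T → S, s 0 = 0 ∧ ∀ b, π (s b) = b := by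
    classical
    refine ⟨fun b => if b = 0 then 0 else Function.surjInv hπ b, if_pos rfl, fun b => ?_⟩
    dsimp only
    split_ifs with hb
    · rw [hb, map_zero]
    · exact Function.surjInv_eq hπ b
  set x := P.coeff.symm (Finsupp.mapRange s hs0 (Q.coeff y))
  have hx : ∀ i, P.coeff x i = s (Q.coeff y i) := fun i => by
    rw [AddEquiv.apply_symm_apply, Finsupp.mapRange_apply]
  refine ⟨x, (P.deg_lt_natCast_iff).2 fun i hi => ?_, Q.coeff.injective (Finsupp.ext fun i => ?_)⟩
  · rw [hx, (Q.deg_lt_natCast_iff).1 hy i hi, hs0]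
  · rw [coeff_red, hx, hs]

lemma Monic.red [Nontrivial T] {f : R} {m : ℕ} (hf : P.Monic f m) : Q.Monic (P.red Q π f) m := by
  have hm : Q.coeff (P.red Q π f) m = 1 := by rw [coeff_red, hf.2, map_one]
  refine ⟨le_antisymm ((P.deg_red_le Q π f).trans hf.1.le) ?_, hm⟩
  exact Finset.le_max (Finsupp.mem_support_iff.2 (hm ▸ one_ne_zero))

variable {π} (hσ : ∀ a, π (σ₁ a) = σ₂ (π a)) (hδ : ∀ a, π (δ₁ a) = δ₂ (π a))
include hσ hδ

lemma red_X_mul (z : R) : P.red Q π (P.X * z) = Q.X * P.red Q π z := by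
  induction z using P.induction_on with
  | zero => simp [red_zero]
  | add x y hx hy => rw [mul_add, red_add, red_add, mul_add, hx, hy]
  | C_mul_X_pow a i =>
    rw [red_C_mul_X_pow, ← mul_assoc, ← mul_assoc, P.X_mul, Q.X_mul, add_mul, add_mul, red_add,
      mul_assoc, mul_assoc, ← pow_succ', ← pow_succ', red_C_mul_X_pow, red_C_mul_X_pow, hσ, hδ]

lemma red_mul (x z : R) : P.red Q π (x * z) = P.red Q π x * P.red Q π z := by
  have red_X_pow_mul : ∀ k : ℕ, P.red Q π (P.X ^ k * z) = Q.X ^ k * P.red Q π z := by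
    intro k
    induction k with
    | zero => simp
    | succ k ih => rw [pow_succ', mul_assoc, red_X_mul P Q hσ hδ, ih, pow_succ', mul_assoc]
  induction x using P.induction_on with
  | zero => simp [red_zero]
  | add x y hx hy => rw [add_mul, red_add, red_add, add_mul, hx, hy]
  | C_mul_X_pow a i =>
    rw [mul_assoc, red_C_mul, red_X_pow_mul, red_C_mul_X_pow, mul_assoc]

lemma red_modr {f : R} {m : ℕ} (hf : P.Monic f m) (g : R) :
    P.red Q π (P.modr f g) = Q.modr (P.red Q π f) (P.red Q π g) := by
  rcases subsingleton_or_nontrivial T with hT | hT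
  -- over the zero ring `f̄` is not monic, but then `R'` is trivial
  · have : Subsingleton R' := Q.coeff.injective.subsingleton
    exact Subsingleton.elim _ _
  obtain ⟨q, r, rfl, hr⟩ := hf.exists_eq_mul_add g
  rw [hf.modr_eq rfl hr, red_add, red_mul P Q hσ hδ]
  exact ((hf.red P Q π).modr_eq rfl ((P.deg_red_le Q π r).trans_lt hr)).symm

lemma red_modr_eq_zero {f g : R} {m : ℕ} (hf : P.Monic f m) (hg : P.red Q π g = 0) :
    P.red Q π (P.modr f g) = 0 := by
  rw [red_modr P Q hσ hδ hf, hg, ← P.red_zero Q π, ← red_modr P Q hσ hδ hf, hf.modr_zero,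
    red_zero]

end Reduction

end SkewPolyRing

theorem natural_order_quotient_iso_general
    (K : Type*) [Field K]
    (pK : Ideal (𝓞 K))
    -- the restriction σ₀ of σ to O_K and the induced automorphism σ̄ of O_K/𝔭O_K
    (σ₀ : 𝓞 K →+* 𝓞 K)
    (σb : (𝓞 K ⧸ pK) →+* (𝓞 K ⧸ pK))
    (hσb : ∀ x : 𝓞 K, σb (Ideal.Quotient.mk pK x) = Ideal.Quotient.mk pK (σ₀ x))
    -- an F-linear left σ-derivation δ preserving O_K, its restriction δ₀,
    -- and the induced left σ̄-derivation δ̄ of O_K/𝔭O_K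
    (δ₀ : 𝓞 K → 𝓞 K)
    (δb : (𝓞 K ⧸ pK) → (𝓞 K ⧸ pK))
    (hδb : ∀ x : 𝓞 K, δb (Ideal.Quotient.mk pK x) = Ideal.Quotient.mk pK (δ₀ x))
    -- Λ is (the set of elements of degree < m of) O_K[t;σ,δ]/O_K[t;σ,δ]f
    {R R' : Type*} [Ring R] [Ring R']
    (P : SkewPolyRing (𝓞 K) σ₀ δ₀ R)
    (Q : SkewPolyRing (𝓞 K ⧸ pK) σb δb R')
    (f : R) (m : ℕ) (hf : P.Monic f m)
    (Λ : Set R) (hΛ : Λ = {x : R | P.deg x < (m : WithBot ℕ)})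
    (pΛ : Set R)
    (hpΛ : pΛ = {x : R | P.deg x < (m : WithBot ℕ) ∧ ∀ i : ℕ, P.coeff x i ∈ pK})
    (Ψ : R → R') (hΨ : Ψ = SkewPolyRing.red P Q (Ideal.Quotient.mk pK)) :
    -- Ψ is additive and unital
    (∀ x y : R, Ψ (x + y) = Ψ x + Ψ y) ∧ Ψ (1 : R) = 1 ∧
    -- Ψ is multiplicative from S_f to S_f̄
    (∀ x ∈ Λ, ∀ y ∈ Λ, Ψ (P.pmul f x y) = Q.pmul (Ψ f) (Ψ x) (Ψ y)) ∧
    -- Ψ maps Λ onto S_f̄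
    (∀ y : R', Q.deg y < (m : WithBot ℕ) → ∃ x ∈ Λ, Ψ x = y) ∧
    -- the kernel of Ψ on Λ is 𝔭Λ = {∑ aᵢtⁱ : aᵢ ∈ 𝔭O_K}
    (∀ x ∈ Λ, (Ψ x = 0 ↔ x ∈ pΛ)) ∧
    -- 𝔭Λ is a two-sided ideal of Λ
    ((∀ x ∈ pΛ, ∀ y ∈ pΛ, x - y ∈ pΛ) ∧
      ∀ a ∈ Λ, ∀ x ∈ pΛ, P.pmul f a x ∈ pΛ ∧ P.pmul f x a ∈ pΛ) := by
  subst hΛ hpΛ hΨ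
  set π := Ideal.Quotient.mk pK
  have hσ : ∀ a, π (σ₀ a) = σb (π a) := fun a => (hσb a).symm
  have hδ : ∀ a, π (δ₀ a) = δb (π a) := fun a => (hδb a).symm
  have hker : ∀ x, P.red Q π x = 0 ↔ ∀ i, P.coeff x i ∈ pK := fun x =>
    (P.red_eq_zero_iff Q π).trans (forall_congr' fun i => Ideal.Quotient.eq_zero_iff_mem)
  have hker_pmul : ∀ a x, P.red Q π x = 0 →
      P.red Q π (P.pmul f a x) = 0 ∧ P.red Q π (P.pmul f x a) = 0 := fun a x hx =>
    ⟨P.red_modr_eq_zero Q hσ hδ hf (by rw [P.red_mul Q hσ hδ, hx, mul_zero]),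
      P.red_modr_eq_zero Q hσ hδ hf (by rw [P.red_mul Q hσ hδ, hx, zero_mul])⟩
  refine ⟨P.red_add Q π, P.red_one Q π, fun x _ y _ => ?_, fun y hy => ?_,
    fun x hx => (hker x).trans ⟨fun h => ⟨hx, h⟩, And.right⟩, ?_, ?_⟩
  · rw [SkewPolyRing.pmul, SkewPolyRing.pmul, P.red_modr Q hσ hδ hf, P.red_mul Q hσ hδ]
  · exact P.exists_deg_lt_red_eq Q π Ideal.Quotient.mk_surjective hy
  · rintro x ⟨hx, hxp⟩ y ⟨hy, hyp⟩
    refine ⟨P.deg_sub_lt hx hy, fun i => ?_⟩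
    rw [map_sub, Finsupp.sub_apply]
    exact sub_mem (hxp i) (hyp i)
  · rintro a - x ⟨-, hxp⟩
    obtain ⟨hax, hxa⟩ := hker_pmul a x ((hker x).2 hxp)
    exact ⟨⟨hf.deg_modr_lt _, (hker _).1 hax⟩, ⟨hf.deg_modr_lt _, (hker _).1 hxa⟩⟩

/-- (the coefficient-wise reduction map
`Ψ : Λ → S_f̄ = (O_K/𝔭O_K)[t;σ̄,δ̄]/(O_K/𝔭O_K)[t;σ̄,δ̄]f̄` is a surjective unital
homomorphism of nonassociative rings with kernel `𝔭Λ`, hence induces an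
isomorphism `Λ/𝔭Λ ≅ S_f̄`). -/
theorem natural_order_quotient_iso
    (F K : Type*) [Field F] [Field K] [NumberField F] [NumberField K]
    [Algebra F K] [IsGalois F K] (σ : K ≃ₐ[F] K)
    (𝔭 : Ideal (𝓞 F)) [𝔭.IsPrime] (h𝔭 : 𝔭 ≠ ⊥)
    (pK : Ideal (𝓞 K)) (hpK : pK = Ideal.map (algebraMap (𝓞 F) (𝓞 K)) 𝔭)
    -- the restriction σ₀ of σ to O_K and the induced automorphism σ̄ of O_K/𝔭O_K
    (σ₀ : 𝓞 K →+* 𝓞 K)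
    (hσ₀ : ∀ x : 𝓞 K, algebraMap (𝓞 K) K (σ₀ x) = σ (algebraMap (𝓞 K) K x))
    (σb : (𝓞 K ⧸ pK) →+* (𝓞 K ⧸ pK))
    (hσb : ∀ x : 𝓞 K, σb (Ideal.Quotient.mk pK x) = Ideal.Quotient.mk pK (σ₀ x))
    -- an F-linear left σ-derivation δ preserving O_K, its restriction δ₀,
    -- and the induced left σ̄-derivation δ̄ of O_K/𝔭O_K
    (δ : K → K)
    (hadd : ∀ a b : K, δ (a + b) = δ a + δ b)
    (hlin : ∀ (c : F) (a : K), δ (algebraMap F K c * a) = algebraMap F K c * δ a)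
    (hleib : ∀ a b : K, δ (a * b) = σ a * δ b + δ a * b)
    (δ₀ : 𝓞 K → 𝓞 K)
    (hδ₀ : ∀ x : 𝓞 K, algebraMap (𝓞 K) K (δ₀ x) = δ (algebraMap (𝓞 K) K x))
    (δb : (𝓞 K ⧸ pK) → (𝓞 K ⧸ pK))
    (hδb : ∀ x : 𝓞 K, δb (Ideal.Quotient.mk pK x) = Ideal.Quotient.mk pK (δ₀ x))
    -- Λ is (the set of elements of degree < m of) O_K[t;σ,δ]/O_K[t;σ,δ]f
    {R R' : Type*} [Ring R] [Ring R']
    (P : SkewPolyRing (𝓞 K) σ₀ δ₀ R)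
    (Q : SkewPolyRing (𝓞 K ⧸ pK) σb δb R')
    (f : R) (m : ℕ) (hm : 1 ≤ m) (hf : P.Monic f m)
    (Λ : Set R) (hΛ : Λ = {x : R | P.deg x < (m : WithBot ℕ)})
    (pΛ : Set R)
    (hpΛ : pΛ = {x : R | P.deg x < (m : WithBot ℕ) ∧ ∀ i : ℕ, P.coeff x i ∈ pK})
    (Ψ : R → R') (hΨ : Ψ = SkewPolyRing.red P Q (Ideal.Quotient.mk pK)) :
    -- Ψ is additive and unital
    (∀ x y : R, Ψ (x + y) = Ψ x + Ψ y) ∧ Ψ (1 : R) = 1 ∧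
    -- Ψ is multiplicative from S_f to S_f̄
    (∀ x ∈ Λ, ∀ y ∈ Λ, Ψ (P.pmul f x y) = Q.pmul (Ψ f) (Ψ x) (Ψ y)) ∧
    -- Ψ maps Λ onto S_f̄
    (∀ y : R', Q.deg y < (m : WithBot ℕ) → ∃ x ∈ Λ, Ψ x = y) ∧
    -- the kernel of Ψ on Λ is 𝔭Λ = {∑ aᵢtⁱ : aᵢ ∈ 𝔭O_K}
    (∀ x ∈ Λ, (Ψ x = 0 ↔ x ∈ pΛ)) ∧
    -- 𝔭Λ is a two-sided ideal of Λ
    ((∀ x ∈ pΛ, ∀ y ∈ pΛ, x - y ∈ pΛ) ∧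
      ∀ a ∈ Λ, ∀ x ∈ pΛ, P.pmul f a x ∈ pΛ ∧ P.pmul f x a ∈ pΛ) :=
  natural_order_quotient_iso_general K pK σ₀ σb hσb δ₀ δb hδb P Q f m hf Λ hΛ pΛ hpΛ Ψ hΨ
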